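/- For every nonzero rational number r, tanh(r) is irrational. -/

import Mathlib

/-!
Hermite's argument. If `tanh r = s` is rational, then so is `exp (2 * r) = (1 + s) / (1 - s)`,
and raising it to the power `den (2 * r)` makes `exp m` rational for a nonzero integer `m`.
All derivatives of `(X * (1 - X)) ^ n` vanish modulo `n!` at `0` and `1`, so repeated
integration by parts gives `m ^ (2n + 1) * ∫₀¹ (x (1 - x)) ^ n e ^ (m x) dx = n! (a e ^ m + b)`
with integers `a`, `b`. The integral lies in `(0, e ^ |m|]`, so the linear forms `a e ^ m + b`
are nonzero and of size `O(|m| ^ (2n + 1) / n!) → 0`, which no rational `e ^ m` allows.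
-/

open Polynomial Real intervalIntegral
open scoped Nat

theorem mul_integral_aeval_mul_exp {R : Type*} [CommSemiring R] [Algebra R ℝ] (p : R[X])
    (c a b : ℝ) :
    c * ∫ x in a..b, aeval x p * exp (c * x) =
      aeval b p * exp (c * b) - aeval a p * exp (c * a) -
        ∫ x in a..b, aeval x (derivative p) * exp (c * x) := by
  have hderiv (x : ℝ) : HasDerivAt (fun y => aeval y p * exp (c * y))
      (aeval x (derivative p) * exp (c * x) + c * (aeval x p * exp (c * x))) x := by
    refine ((p.hasDerivAt_aeval x).mul ((hasDerivAt_id' x).const_mul c).exp).congr_deriv ?_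
    ring
  rw [← integral_eq_sub_of_hasDerivAt (fun x _ => hderiv x) (Continuous.intervalIntegrable
    (by fun_prop) _ _), integral_add (Continuous.intervalIntegrable (by fun_prop) _ _)
    (Continuous.intervalIntegrable (by fun_prop) _ _), integral_const_mul]
  ring

theorem aeval_intCast_eq_eval {A : Type*} [Ring A] (p : ℤ[X]) (z : ℤ) :
    aeval (z : A) p = p.eval z := by
  simpa using aeval_algebraMap_apply_eq_algebraMap_eval (A := A) z p

theorem mul_integral_zero_one_aeval_mul_exp (p : ℤ[X]) (c : ℝ) :
    c * ∫ x in (0 : ℝ)..1, aeval x p * exp (c * x) =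
      p.eval 1 * exp c - p.eval 0 - ∫ x in (0 : ℝ)..1, aeval x (derivative p) * exp (c * x) := by
  have h0 : aeval (0 : ℝ) p = p.eval 0 := by simpa using aeval_intCast_eq_eval (A := ℝ) p 0
  have h1 : aeval (1 : ℝ) p = p.eval 1 := by simpa using aeval_intCast_eq_eval (A := ℝ) p 1
  rw [mul_integral_aeval_mul_exp, h0, h1, mul_zero, mul_one, exp_zero, mul_one]

theorem exists_pow_mul_integral_aeval_mul_exp_eq (m N : ℤ) {d : ℕ} {p : ℤ[X]}
    (hp : p.natDegree ≤ d) (h0 : ∀ k, N ∣ (derivative^[k] p).eval 0)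
    (h1 : ∀ k, N ∣ (derivative^[k] p).eval 1) :
    ∃ a b : ℤ, (m : ℝ) ^ (d + 1) * ∫ x in (0 : ℝ)..1, aeval x p * exp (m * x) =
      N * (a * exp m + b) := by
  induction d generalizing p with
  | zero =>
    obtain ⟨u, hu : p.eval 0 = N * u⟩ := h0 0
    obtain ⟨v, hv : p.eval 1 = N * v⟩ := h1 0
    refine ⟨v, -u, ?_⟩
    rw [zero_add, pow_one, mul_integral_zero_one_aeval_mul_exp, hu, hv,
      derivative_of_natDegree_zero (Nat.le_zero.mp hp)]
    simp only [map_zero, zero_mul, integral_zero]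
    push_cast
    ring
  | succ d ih =>
    obtain ⟨u, hu : p.eval 0 = N * u⟩ := h0 0
    obtain ⟨v, hv : p.eval 1 = N * v⟩ := h1 0
    obtain ⟨a, b, hab⟩ := ih (p := derivative p) ((natDegree_derivative_le p).trans (by omega))
      (fun k => h0 (k + 1)) (fun k => h1 (k + 1))
    refine ⟨m ^ (d + 1) * v - a, -(m ^ (d + 1) * u) - b, ?_⟩
    rw [pow_succ, mul_assoc, mul_integral_zero_one_aeval_mul_exp, mul_sub, hab, hu, hv]
    push_cast
    ring

theorem factorial_dvd_iterate_derivative_eval_zero {R : Type*} [Semiring R] {n : ℕ} {p : R[X]}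
    (hp : X ^ n ∣ p) (k : ℕ) : (n ! : R) ∣ (derivative^[k] p).eval 0 := by
  rw [← coeff_zero_eq_eval_zero, coeff_iterate_derivative, zero_add, Nat.descFactorial_self,
    nsmul_eq_mul]
  rcases lt_or_ge k n with hk | hk
  · simp [X_pow_dvd_iff.mp hp k hk]
  · exact (Nat.cast_dvd_cast (Nat.factorial_dvd_factorial hk)).mul_right _

theorem iterate_derivative_eval_one_of_comp_one_sub_X {R : Type*} [CommRing R] {p : R[X]}
    (hp : p.comp (1 - X) = p) (k : ℕ) :
    (derivative^[k] p).eval 1 = (-1) ^ k * (derivative^[k] p).eval 0 := by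
  conv_lhs => rw [← hp, iterate_derivative_comp_one_sub_X]
  simp [eval_comp]

theorem X_mul_one_sub_X_pow_comp_one_sub_X {R : Type*} [CommRing R] (n : ℕ) :
    ((X * (1 - X)) ^ n : R[X]).comp (1 - X) = (X * (1 - X)) ^ n := by
  simp only [pow_comp, mul_comp, X_comp, sub_comp, one_comp]
  ring

theorem natDegree_X_mul_one_sub_X_pow_le {R : Type*} [CommRing R] (n : ℕ) :
    ((X * (1 - X)) ^ n : R[X]).natDegree ≤ 2 * n := by
  have h : (X * (1 - X) : R[X]).natDegree ≤ 1 + 1 :=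
    natDegree_mul_le_of_le natDegree_X_le ((natDegree_sub_le _ _).trans (by simp [natDegree_X_le]))
  simpa [mul_comm] using natDegree_pow_le_of_le n h

theorem integral_mul_one_sub_pow_mul_exp_pos (n : ℕ) (c : ℝ) :
    0 < ∫ x in (0 : ℝ)..1, (x * (1 - x)) ^ n * exp (c * x) :=
  intervalIntegral_pos_of_pos_on (Continuous.intervalIntegrable (by fun_prop) _ _)
    (fun x hx => mul_pos (pow_pos (mul_pos hx.1 (sub_pos.2 hx.2)) n) (exp_pos _)) zero_lt_one

theorem integral_mul_one_sub_pow_mul_exp_le (n : ℕ) (c : ℝ) :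
    ∫ x in (0 : ℝ)..1, (x * (1 - x)) ^ n * exp (c * x) ≤ exp |c| := by
  calc ∫ x in (0 : ℝ)..1, (x * (1 - x)) ^ n * exp (c * x)
      ≤ ∫ x in (0 : ℝ)..1, exp |c| := by
        refine integral_mono_on zero_le_one (Continuous.intervalIntegrable (by fun_prop) _ _)
          intervalIntegrable_const fun x ⟨hx0, hx1⟩ => ?_
        have hpow : (x * (1 - x)) ^ n ≤ 1 :=
          pow_le_one₀ (mul_nonneg hx0 (sub_nonneg.2 hx1)) (by nlinarith)
        have hexp : exp (c * x) ≤ exp |c| := by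
          refine exp_le_exp.2 ((le_abs_self _).trans ?_)
          rw [abs_mul, abs_of_nonneg hx0]
          exact mul_le_of_le_one_right (abs_nonneg c) hx1
        simpa using mul_le_mul hpow hexp (exp_pos _).le zero_le_one
    _ = exp |c| := by simp

theorem irrational_of_forall_exists_int_mul_add {x : ℝ}
    (h : ∀ ε > 0, ∃ a b : ℤ, a * x + b ≠ 0 ∧ |a * x + b| < ε) : Irrational x := by
  rintro ⟨q, rfl⟩
  obtain ⟨a, b, hne, hlt⟩ := h (1 / q.den) (by positivity)
  have hden : (0 : ℝ) < q.den := by positivity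
  have hq : (a * q + b : ℝ) = ((a * q.num + b * q.den : ℤ) : ℝ) / q.den := by
    rw [Rat.cast_def]
    push_cast
    field_simp
  rw [hq] at hne hlt
  have hint : (a * q.num + b * q.den : ℤ) ≠ 0 := fun h => hne (by rw [h]; simp)
  rw [abs_div, abs_of_pos hden, div_lt_div_iff_of_pos_right hden] at hlt
  exact hint (Int.abs_lt_one_iff.mp (by exact_mod_cast hlt))

theorem irrational_exp_intCast {m : ℤ} (hm : m ≠ 0) : Irrational (exp m) := by
  refine irrational_of_forall_exists_int_mul_add fun ε hε => ?_
  obtain ⟨n, hn⟩ := (FloorSemiring.eventually_mul_pow_lt_factorial_sub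
    (|(m : ℝ)| * exp |(m : ℝ)| / ε) ((m : ℝ) ^ 2) 0).exists
  have hdvd0 := factorial_dvd_iterate_derivative_eval_zero (R := ℤ) (n := n)
    (p := (X * (1 - X)) ^ n) (by rw [mul_pow]; exact dvd_mul_right _ _)
  obtain ⟨a, b, hab⟩ := exists_pow_mul_integral_aeval_mul_exp_eq m (n ! : ℤ)
    (natDegree_X_mul_one_sub_X_pow_le n) hdvd0 fun k => by
      rw [iterate_derivative_eval_one_of_comp_one_sub_X (X_mul_one_sub_X_pow_comp_one_sub_X n)]
      exact (hdvd0 k).mul_left _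
  simp only [map_pow, map_mul, aeval_X, map_sub, map_one] at hab
  set I := ∫ x in (0 : ℝ)..1, (x * (1 - x)) ^ n * exp (m * x)
  have hI_pos : 0 < I := integral_mul_one_sub_pow_mul_exp_pos n m
  have hfac : (0 : ℝ) < n ! := by positivity
  have hform : (a : ℝ) * exp m + b = m ^ (2 * n + 1) * I / n ! := by
    rw [hab]
    push_cast
    field_simp
  refine ⟨a, b, ?_, ?_⟩
  · have : (m : ℝ) ≠ 0 := by exact_mod_cast hm
    rw [hform]
    positivity
  · rw [hform, abs_div, abs_mul, abs_pow, abs_of_pos hI_pos, abs_of_pos hfac, div_lt_iff₀ hfac]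
    calc |(m : ℝ)| ^ (2 * n + 1) * I ≤ |(m : ℝ)| ^ (2 * n + 1) * exp |(m : ℝ)| := by
          gcongr
          exact integral_mul_one_sub_pow_mul_exp_le n m
      _ = ε * (|(m : ℝ)| * exp |(m : ℝ)| / ε * ((m : ℝ) ^ 2) ^ n) := by
          rw [pow_succ, pow_mul, sq_abs]
          field_simp
      _ < ε * n ! := by
          gcongr
          simpa using hn

theorem irrational_exp_ratCast {q : ℚ} (hq : q ≠ 0) : Irrational (exp q) := by
  have hden : (q.den : ℝ) * q = q.num := by exact_mod_cast Rat.den_mul_eq_num q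
  refine Irrational.of_pow q.den ?_
  rw [← exp_nat_mul, hden]
  exact irrational_exp_intCast (Rat.num_ne_zero.mpr hq)

theorem exp_two_mul_eq_one_add_tanh_div_one_sub_tanh (x : ℝ) :
    exp (2 * x) = (1 + tanh x) / (1 - tanh x) := by
  rw [two_mul, exp_add, tanh_eq, exp_neg]
  field_simp
  ring

theorem tanh_nonzero_rat_irrational (r : ℚ) (hr : r ≠ 0) :
    Irrational (Real.tanh (r : ℝ)) := by
  rintro ⟨s, hs⟩
  refine irrational_exp_ratCast (mul_ne_zero two_ne_zero hr) ⟨(1 + s) / (1 - s), ?_⟩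
  push_cast
  rw [hs, exp_two_mul_eq_one_add_tanh_div_one_sub_tanh]
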